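/- arXiv:2512.22002 — 3 statements merged into one kernel-verified Lean document; each statement's English description precedes it below -/
import Mathlib

section
/- Let U be the 4×4 matrix with rows (0,1,0,0), (1,0,0,0), (0,0,1,0), (0,0,0,1), and let v ∈ ℂ⁴ be a column vector with vᵀUv ≠ 0. Define τ(v) = iU(I₄ - (2/(vᵀUv)) v vᵀ U). Then τ(v) is a symmetric matrix, τ(v) is invariant under replacing v by λv for any nonzero complex λ, and (Uτ(v))² = -I₄. -/
open Matrix

/-- The matrix `U` with rows (0,1,0,0), (1,0,0,0), (0,0,1,0), (0,0,0,1), over `ℂ`. -/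
def UmatC : Matrix (Fin 4) (Fin 4) ℂ := !![0,1,0,0; 1,0,0,0; 0,0,1,0; 0,0,0,1]

/-- `τ(v) = iU(I₄ - (2/(vᵀUv)) v vᵀ U)`. -/
noncomputable def tauv (v : Fin 4 → ℂ) : Matrix (Fin 4) (Fin 4) ℂ :=
  Complex.I • (UmatC * (1 - (2 / (v ⬝ᵥ (UmatC *ᵥ v))) • (Matrix.vecMulVec v v * UmatC)))

lemma hUU : UmatC * UmatC = 1 := by
  ext i j
  fin_cases i <;> fin_cases j <;>
    simp [UmatC, Matrix.mul_apply, Fin.sum_univ_four, Matrix.one_apply, vecHead, vecTail]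

lemma hUt : UmatCᵀ = UmatC := by
  ext i j
  fin_cases i <;> fin_cases j <;> simp [UmatC, vecHead, vecTail]

lemma hvvt (v : Fin 4 → ℂ) : (vecMulVec v v)ᵀ = vecMulVec v v := by
  ext i j; simp [vecMulVec_apply, mul_comm]

lemma hsand (v : Fin 4 → ℂ) :
    vecMulVec v v * (UmatC * vecMulVec v v) = (v ⬝ᵥ UmatC *ᵥ v) • vecMulVec v v := by
  ext i j
  simp [Matrix.mul_apply, vecMulVec_apply, dotProduct, mulVec, UmatC,
    Fin.sum_univ_four, smul_eq_mul, vecHead, vecTail, vecMul]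
  ring

theorem tauv_symm_scale_invariant_involutive (v : Fin 4 → ℂ)
    (hv : v ⬝ᵥ (UmatC *ᵥ v) ≠ 0) :
    (tauv v)ᵀ = tauv v ∧
    (∀ c : ℂ, c ≠ 0 → tauv (c • v) = tauv v) ∧
    (UmatC * tauv v) ^ 2 = -1 := by
  set q : ℂ := v ⬝ᵥ (UmatC *ᵥ v) with hq
  set s : ℂ := 2 / q with hs
  refine ⟨?_, ?_, ?_⟩
  · unfold tauv
    rw [← hq, ← hs, mul_sub, mul_one, Matrix.mul_smul, transpose_smul, transpose_sub,
      transpose_smul, hUt, transpose_mul, transpose_mul, hUt, hvvt, mul_assoc]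
  · intro c hc
    have hvv' : vecMulVec (c • v) (c • v) = (c * c) • vecMulVec v v := by
      ext i j; simp [vecMulVec_apply, smul_eq_mul]; ring
    have hq' : (c • v) ⬝ᵥ (UmatC *ᵥ (c • v)) = c * c * q := by
      rw [mulVec_smul, smul_dotProduct, dotProduct_smul, ← hq, smul_eq_mul, smul_eq_mul]
      ring
    unfold tauv
    have hsc : 2 / (c * c * q) * (c * c) = s := by
      rw [hs]; field_simp
    rw [hq', hvv', ← hq, smul_mul_assoc, smul_smul, hsc]
  · have hUtau : UmatC * tauv v =
        Complex.I • (1 - s • (vecMulVec v v * UmatC)) := by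
      unfold tauv
      rw [← hq, ← hs, Matrix.mul_smul, ← mul_assoc, hUU, one_mul]
    have hMM : (vecMulVec v v * UmatC) * (vecMulVec v v * UmatC)
        = q • (vecMulVec v v * UmatC) := by
      have h1 : (vecMulVec v v * UmatC) * (vecMulVec v v * UmatC)
          = (vecMulVec v v * (UmatC * vecMulVec v v)) * UmatC := by
        noncomm_ring
      rw [h1, hsand, ← hq, smul_mul_assoc]
    set M : Matrix (Fin 4) (Fin 4) ℂ := vecMulVec v v * UmatC with hM
    have hss : s * s * q = s + s := by
      rw [hs]; field_simp; ring
    have hNN : (s • M) * (s • M) = s • M + s • M := by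
      rw [smul_mul_assoc, Matrix.mul_smul, hMM, smul_smul, smul_smul, hss, add_smul]
    have hAA : (1 - s • M) * (1 - s • M) = 1 := by
      rw [mul_sub, mul_one, sub_mul, one_mul, hNN]
      abel
    rw [hUtau, sq, smul_mul_smul_comm, Complex.I_mul_I, hAA]
    simp
end

section
/- Let U be the 4×4 matrix with rows (0,1,0,0), (1,0,0,0), (0,0,1,0), (0,0,0,1), and let v ∈ ℂ⁴ satisfy vᵀUv ≠ 0 and v*Uv < 0 (where v* is the conjugate transpose). Then the imaginary part of τ(v) = iU(I₄ - (2/(vᵀUv)) v vᵀ U) is positive definite. -/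
open Matrix

/-- The imaginary part of a complex matrix, regarded as a complex matrix. -/
noncomputable def imPart (M : Matrix (Fin 4) (Fin 4) ℂ) : Matrix (Fin 4) (Fin 4) ℂ :=
  M.map (fun z => (z.im : ℂ))

open Complex
set_option maxHeartbeats 4000000
set_option linter.unreachableTactic false
set_option linter.unusedTactic false
local notation "conj'" => starRingEnd ℂ

lemma lemA (v0 v1 v2 v3 Y0 Y1 Y2 Y3 : ℂ)
    (hp : (conj' v0*v1 + conj' v1*v0 + conj' v2*v2 + conj' v3*v3).re < 0)
    (horth : v0*Y1 + v1*Y0 + v2*Y2 + v3*Y3 = 0)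
    (hY : ¬(Y0 = 0 ∧ Y1 = 0 ∧ Y2 = 0 ∧ Y3 = 0)) :
    0 < (conj' Y0*Y1 + conj' Y1*Y0 + conj' Y2*Y2 + conj' Y3*Y3).re := by
  set A := Y0 + Y1 with hA
  set B := Y0 - Y1 with hB
  have h2 : (v0-v1)*B = (v0+v1)*A + 2*v2*Y2 + 2*v3*Y3 := by
    rw [hA, hB]; linear_combination (-2 : ℂ)*horth
  have h1 : normSq (v0+v1) + 2*normSq v2 + 2*normSq v3 < normSq (v0-v1) := by
    simp only [normSq_apply, add_re, add_im, sub_re, sub_im, mul_re, mul_im,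
      conj_re, conj_im, Complex.re_ofNat, Complex.im_ofNat] at hp ⊢
    nlinarith [hp]
  have hβpos : 0 < normSq (v0-v1) := by
    nlinarith [normSq_nonneg (v0+v1), normSq_nonneg v2, normSq_nonneg v3]
  have hgoal_eq : (conj' Y0*Y1 + conj' Y1*Y0 + conj' Y2*Y2 + conj' Y3*Y3).re
      = ((normSq A + 2*normSq Y2 + 2*normSq Y3) - normSq B)/2 := by
    simp only [hA, hB, normSq_apply, add_re, add_im, sub_re, sub_im, mul_re, mul_im,
      conj_re, conj_im, Complex.re_ofNat, Complex.im_ofNat]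
    ring
  rw [hgoal_eq]
  have key : normSq B < normSq A + 2*normSq Y2 + 2*normSq Y3 := by
    by_cases hS0 : normSq A + 2*normSq Y2 + 2*normSq Y3 = 0
    · exfalso
      have hA0 : A = 0 := by
        rw [← normSq_eq_zero]
        nlinarith [normSq_nonneg A, normSq_nonneg Y2, normSq_nonneg Y3]
      have hY2 : Y2 = 0 := by
        rw [← normSq_eq_zero]
        nlinarith [normSq_nonneg A, normSq_nonneg Y2, normSq_nonneg Y3]
      have hY3 : Y3 = 0 := by
        rw [← normSq_eq_zero]
        nlinarith [normSq_nonneg A, normSq_nonneg Y2, normSq_nonneg Y3]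
      have hB0 : B = 0 := by
        have hvne : v0 - v1 ≠ 0 := by
          intro h; rw [h, normSq_zero] at hβpos; exact lt_irrefl 0 hβpos
        have := h2
        rw [hA0, hY2, hY3] at this
        simpa [hvne, sub_eq_zero] using this
      exact hY ⟨by linear_combination (hA0 + hB0)/2, by linear_combination (hA0 - hB0)/2, hY2, hY3⟩
    · have hSpos : 0 < normSq A + 2*normSq Y2 + 2*normSq Y3 := by
        have hge : (0:ℝ) ≤ normSq A + 2*normSq Y2 + 2*normSq Y3 := by nlinarith [normSq_nonneg A, normSq_nonneg Y2, normSq_nonneg Y3]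
        rcases lt_or_eq_of_le hge with h | h
        · exact h
        · exact absurd h.symm hS0
      have idLag : (normSq (v0+v1) + 2*normSq v2 + 2*normSq v3) *
            (normSq A + 2*normSq Y2 + 2*normSq Y3)
            - normSq ((v0+v1)*A + 2*v2*Y2 + 2*v3*Y3)
          = 2*normSq (conj' (v0+v1)*Y2 - conj' v2*A) + 2*normSq (conj' (v0+v1)*Y3 - conj' v3*A)
            + 4*normSq (conj' v2*Y3 - conj' v3*Y2) := by
        simp only [normSq_apply, add_re, add_im, sub_re, sub_im, mul_re, mul_im,
          conj_re, conj_im, Complex.re_ofNat, Complex.im_ofNat]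
        ring
      have hCS : normSq ((v0+v1)*A + 2*v2*Y2 + 2*v3*Y3)
          ≤ (normSq (v0+v1) + 2*normSq v2 + 2*normSq v3) *
            (normSq A + 2*normSq Y2 + 2*normSq Y3) := by
        nlinarith [normSq_nonneg (conj' (v0+v1)*Y2 - conj' v2*A),
          normSq_nonneg (conj' (v0+v1)*Y3 - conj' v3*A),
          normSq_nonneg (conj' v2*Y3 - conj' v3*Y2), idLag]
      have hBid : normSq (v0-v1) * normSq B = normSq ((v0+v1)*A + 2*v2*Y2 + 2*v3*Y3) := by
        rw [← normSq_mul, h2]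
      have hlt : normSq (v0-v1) * normSq B < normSq (v0-v1) *
          (normSq A + 2*normSq Y2 + 2*normSq Y3) := by
        rw [hBid]
        calc normSq ((v0+v1)*A + 2*v2*Y2 + 2*v3*Y3)
            ≤ (normSq (v0+v1) + 2*normSq v2 + 2*normSq v3) *
              (normSq A + 2*normSq Y2 + 2*normSq Y3) := hCS
          _ < _ := by nlinarith [hSpos, h1]
      exact lt_of_mul_lt_mul_left hlt (le_of_lt hβpos)
  linarith

lemma hCplxLem (v0 v1 v2 v3 x0 x1 x2 x3 q a b Sc P Y0 Y1 Y2 Y3 : ℂ)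
    (hq : q = 2*v0*v1+v2^2+v3^2)
    (ha : a = conj' x0*v1 + conj' x1*v0 + conj' x2*v2 + conj' x3*v3)
    (hb : b = v0*x1 + v1*x0 + v2*x2 + v3*x3)
    (hS : Sc = conj' x0*x1 + conj' x1*x0 + conj' x2*x2 + conj' x3*x3)
    (hP : P = conj' v0*v1 + conj' v1*v0 + conj' v2*v2 + conj' v3*v3)
    (h0 : Y0 = q*x0 - b*v0) (h1 : Y1 = q*x1 - b*v1) (h2 : Y2 = q*x2 - b*v2)
    (h3 : Y3 = q*x3 - b*v3) :
    conj' Y0*Y1 + conj' Y1*Y0 + conj' Y2*Y2 + conj' Y3*Y3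
      = conj' q * q * Sc - conj' q * (a*b) - q*(conj' a * conj' b) + P*(b*conj' b) := by
  subst h0 h1 h2 h3 hq ha hb hS hP
  rw [Complex.ext_iff]
  constructor <;>
  · simp only [_root_.map_add, _root_.map_mul, _root_.map_sub, _root_.map_pow, _root_.map_ofNat, add_re, add_im, sub_re, sub_im,
      mul_re, mul_im, conj_re, conj_im, re_ofNat, im_ofNat, pow_two]
    ring

lemma keyIneq (v0 v1 v2 v3 x0 x1 x2 x3 d : ℂ)
    (hqne : (2*v0*v1+v2^2+v3^2) ≠ 0)
    (hd : d * (2*v0*v1+v2^2+v3^2) = 2)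
    (hp : (conj' v0*v1 + conj' v1*v0 + conj' v2*v2 + conj' v3*v3).re < 0)
    (hx : ¬(x0 = 0 ∧ x1 = 0 ∧ x2 = 0 ∧ x3 = 0)) :
    0 < ((conj' x0*x1 + conj' x1*x0 + conj' x2*x2 + conj' x3*x3)
        - d * ((conj' x0*v1 + conj' x1*v0 + conj' x2*v2 + conj' x3*v3)
          * (v0*x1 + v1*x0 + v2*x2 + v3*x3))).re := by
  set q : ℂ := 2*v0*v1+v2^2+v3^2 with hqdef
  set a : ℂ := conj' x0*v1 + conj' x1*v0 + conj' x2*v2 + conj' x3*v3 with hadef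
  set b : ℂ := v0*x1 + v1*x0 + v2*x2 + v3*x3 with hbdef
  set Sc : ℂ := conj' x0*x1 + conj' x1*x0 + conj' x2*x2 + conj' x3*x3 with hSdef
  set P : ℂ := conj' v0*v1 + conj' v1*v0 + conj' v2*v2 + conj' v3*v3 with hPdef
  set Y0 : ℂ := q*x0 - b*v0 with hY0
  set Y1 : ℂ := q*x1 - b*v1 with hY1
  set Y2 : ℂ := q*x2 - b*v2 with hY2
  set Y3 : ℂ := q*x3 - b*v3 with hY3
  have hnsqpos : 0 < normSq q := normSq_pos.mpr hqne
  have hC := hCplxLem v0 v1 v2 v3 x0 x1 x2 x3 q a b Sc P Y0 Y1 Y2 Y3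
    hqdef hadef hbdef hSdef hPdef hY0 hY1 hY2 hY3
  -- real version
  have hE1 : (conj' Y0*Y1 + conj' Y1*Y0 + conj' Y2*Y2 + conj' Y3*Y3).re
      = normSq q * Sc.re - 2*(conj' q * (a*b)).re + normSq b * P.re := by
    have e1 : conj' q * q * Sc = (normSq q : ℂ) * Sc := by
      rw [mul_comm (conj' q) q, Complex.mul_conj]
    have e2 : P * (b * conj' b) = (normSq b : ℂ) * P := by
      rw [Complex.mul_conj, mul_comm]
    have e3 : q * (conj' a * conj' b) = conj' (conj' q * (a*b)) := by
      simp only [_root_.map_mul, Complex.conj_conj]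
    rw [hC, e1, e2, e3]
    simp only [sub_re, add_re, Complex.re_ofReal_mul, Complex.conj_re]
    ring
  -- positivity of the cleared-denominator quantity
  have hpos : 0 < normSq q * Sc.re - 2*(conj' q * (a*b)).re := by
    by_cases hYz : Y0 = 0 ∧ Y1 = 0 ∧ Y2 = 0 ∧ Y3 = 0
    · obtain ⟨e0, e1, e2, e3⟩ := hYz
      have hb0 : b ≠ 0 := by
        intro hb0
        apply hx
        rw [hY0, hb0] at e0
        rw [hY1, hb0] at e1
        rw [hY2, hb0] at e2
        rw [hY3, hb0] at e3
        simp only [zero_mul, sub_zero] at e0 e1 e2 e3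
        exact ⟨by exact (mul_eq_zero.mp e0).resolve_left hqne,
               (mul_eq_zero.mp e1).resolve_left hqne,
               (mul_eq_zero.mp e2).resolve_left hqne,
               (mul_eq_zero.mp e3).resolve_left hqne⟩
      have h0 : (conj' Y0*Y1 + conj' Y1*Y0 + conj' Y2*Y2 + conj' Y3*Y3).re = 0 := by
        rw [e0, e1, e2, e3]; simp
      have hnsb : 0 < normSq b := normSq_pos.mpr hb0
      nlinarith [hE1, h0, hp, hnsb]
    · have horth : v0*Y1 + v1*Y0 + v2*Y2 + v3*Y3 = 0 := by
        rw [hY0, hY1, hY2, hY3, hbdef]; ring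
      have hA := lemA v0 v1 v2 v3 Y0 Y1 Y2 Y3 hp horth hYz
      nlinarith [hE1, hA, hp, normSq_nonneg b]
  -- divide back
  have hdre : (d*(a*b)).re * normSq q = 2*(conj' q * (a*b)).re := by
    have h : d*(a*b) * (normSq q : ℂ) = 2*(conj' q * (a*b)) := by
      rw [← Complex.mul_conj q]
      linear_combination (a*b*conj' q) * hd
    calc (d*(a*b)).re * normSq q = (d*(a*b) * (normSq q : ℂ)).re := by
          rw [mul_comm ((d*(a*b))) ((normSq q : ℝ) : ℂ), Complex.re_ofReal_mul]; ring
      _ = (2*(conj' q * (a*b))).re := by rw [h]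
      _ = 2*(conj' q * (a*b)).re := by simp
  have hfin : (Sc - d*(a*b)).re = (normSq q * Sc.re - 2*(conj' q * (a*b)).re) / normSq q := by
    rw [eq_div_iff (ne_of_gt hnsqpos)]
    simp only [sub_re]
    linear_combination -hdre
  rw [hfin]
  exact div_pos hpos hnsqpos

theorem im_tauv_posDef (v : Fin 4 → ℂ)
    (hv : v ⬝ᵥ (UmatC *ᵥ v) ≠ 0)
    (hball : ((star v) ⬝ᵥ (UmatC *ᵥ v)).re < 0) :
    ∀ x : Fin 4 → ℂ, x ≠ 0 → 0 < ((star x) ⬝ᵥ ((imPart (tauv v)) *ᵥ x)).re := by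
  intro x hx
  have hqm : v ⬝ᵥ (UmatC *ᵥ v) = 2*v 0*v 1 + v 2^2 + v 3^2 := by
    simp [UmatC, mulVec, dotProduct, Fin.sum_univ_four, Matrix.vecHead, Matrix.vecTail]
    ring
  have hqne : 2*v 0*v 1 + v 2^2 + v 3^2 ≠ 0 := hqm ▸ hv
  have hp : (conj' (v 0)*v 1 + conj' (v 1)*v 0 + conj' (v 2)*v 2 + conj' (v 3)*v 3).re < 0 := by
    have hPm : ((star v) ⬝ᵥ (UmatC *ᵥ v))
        = conj' (v 0)*v 1 + conj' (v 1)*v 0 + conj' (v 2)*v 2 + conj' (v 3)*v 3 := by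
      simp [UmatC, mulVec, dotProduct, Fin.sum_univ_four, Matrix.vecHead, Matrix.vecTail,
        Pi.star_apply, RCLike.star_def]
      try ring
    rw [hPm] at hball; exact hball
  set d : ℂ := 2 / (v ⬝ᵥ (UmatC *ᵥ v)) with hddef
  clear_value d
  have hd : d * (2*v 0*v 1 + v 2^2 + v 3^2) = 2 := by
    rw [hddef, hqm, div_mul_cancel₀]
    exact hqne
  have hx' : ¬(x 0 = 0 ∧ x 1 = 0 ∧ x 2 = 0 ∧ x 3 = 0) := by
    intro h
    apply hx
    funext i
    fin_cases i <;> simp [h.1, h.2.1, h.2.2.1, h.2.2.2]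
  have h1 : UmatC * (Matrix.vecMulVec v v * UmatC)
      = Matrix.vecMulVec ![v 1, v 0, v 2, v 3] ![v 1, v 0, v 2, v 3] := by
    ext i j
    fin_cases i <;> fin_cases j <;>
      simp [UmatC, Matrix.vecMulVec_apply, Matrix.mul_apply, Fin.sum_univ_four, Matrix.vecHead, Matrix.vecTail] <;> try ring
  have htau : tauv v = Complex.I •
      (UmatC - d • Matrix.vecMulVec ![v 1, v 0, v 2, v 3] ![v 1, v 0, v 2, v 3]) := by
    rw [tauv, mul_sub, mul_one, Matrix.mul_smul, h1, hddef]
  have htauE : ∀ j k, (tauv v) j k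
      = Complex.I * (UmatC j k - d * (![v 1, v 0, v 2, v 3] j * ![v 1, v 0, v 2, v 3] k)) := by
    intro j k
    rw [htau]
    fin_cases j <;> fin_cases k <;>
      simp [Matrix.smul_apply, Matrix.sub_apply, Matrix.vecMulVec_apply, smul_eq_mul]
  have hmain : ((star x) ⬝ᵥ ((imPart (tauv v)) *ᵥ x)).re
      = ((conj' (x 0)*x 1 + conj' (x 1)*x 0 + conj' (x 2)*x 2 + conj' (x 3)*x 3)
        - d * ((conj' (x 0)*v 1 + conj' (x 1)*v 0 + conj' (x 2)*v 2 + conj' (x 3)*v 3)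
          * (v 0*x 1 + v 1*x 0 + v 2*x 2 + v 3*x 3))).re := by
    simp [imPart, Matrix.map_apply, mulVec, dotProduct, Fin.sum_univ_four, htauE, UmatC,
      Pi.star_apply, RCLike.star_def, Matrix.vecHead, Matrix.vecTail,
      add_re, add_im, sub_re, sub_im, mul_re, mul_im, I_re, I_im, ofReal_re, ofReal_im,
      conj_re, conj_im, re_ofNat, im_ofNat, zero_re, zero_im, one_re, one_im]
    ring
  rw [hmain]
  exact keyIneq (v 0) (v 1) (v 2) (v 3) (x 0) (x 1) (x 2) (x 3) d hqne hd hp hx'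
end

section
/- Let v ∈ ℂ⁴ with v*Uv < 0, where U is the 4×4 matrix with rows (0,1,0,0),(1,0,0,0),(0,0,1,0),(0,0,0,1), and v* denotes conjugate transpose. Then vᵀUv ≠ 0. -/
open Matrix

/-!
In the coordinates `v = (a, b, c, d)` the two forms are `vᵀUv = 2ab + c² + d²` and
`Re (v*Uv) = 2 Re (ā b) + |c|² + |d|²`. If `vᵀUv = 0` then
`2 |a| |b| = |c² + d²| ≤ |c|² + |d|²`, while `2 Re (ā b) ≥ -2 |a| |b|`, so `Re (v*Uv) ≥ 0`.
-/

open ComplexConjugate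

theorem Complex.re_conj_mul_add_sum_norm_sq_nonneg {ι : Type*} [Fintype ι] (a b : ℂ) (c : ι → ℂ)
    (h : 2 * (a * b) + ∑ i, c i ^ 2 = 0) :
    0 ≤ 2 * (conj a * b).re + ∑ i, ‖c i‖ ^ 2 := by
  have hab : 2 * (‖a‖ * ‖b‖) ≤ ∑ i, ‖c i‖ ^ 2 :=
    calc 2 * (‖a‖ * ‖b‖) = ‖2 * (a * b)‖ := by rw [norm_mul, norm_mul, Complex.norm_two]
      _ = ‖∑ i, c i ^ 2‖ := by rw [eq_neg_of_add_eq_zero_left h, norm_neg]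
      _ ≤ ∑ i, ‖c i ^ 2‖ := norm_sum_le _ _
      _ = ∑ i, ‖c i‖ ^ 2 := by simp only [norm_pow]
  have hre : -(‖a‖ * ‖b‖) ≤ (conj a * b).re := by
    have := Complex.abs_re_le_norm (conj a * b)
    rw [norm_mul, Complex.norm_conj] at this
    exact neg_le_of_abs_le this
  linarith

theorem UmatC_mulVec (v : Fin 4 → ℂ) : UmatC *ᵥ v = ![v 1, v 0, v 2, v 3] := by
  ext i
  fin_cases i <;> simp [UmatC, mulVec, dotProduct, Fin.sum_univ_four]

theorem dotProduct_UmatC_mulVec (v : Fin 4 → ℂ) :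
    v ⬝ᵥ (UmatC *ᵥ v) = 2 * (v 0 * v 1) + (v 2 ^ 2 + v 3 ^ 2) := by
  rw [UmatC_mulVec]
  simp only [dotProduct, Fin.sum_univ_four, cons_val_zero, cons_val_one, cons_val]
  ring

theorem re_star_dotProduct_UmatC_mulVec (v : Fin 4 → ℂ) :
    (star v ⬝ᵥ (UmatC *ᵥ v)).re = 2 * (conj (v 0) * v 1).re + (‖v 2‖ ^ 2 + ‖v 3‖ ^ 2) := by
  rw [UmatC_mulVec]
  simp only [dotProduct, Pi.star_apply, RCLike.star_def, Fin.sum_univ_four, cons_val_zero,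
    cons_val_one, cons_val, Complex.add_re, Complex.mul_re, Complex.conj_re, Complex.conj_im,
    Complex.sq_norm, Complex.normSq_apply]
  ring

theorem transpose_form_ne_zero_on_ball (v : Fin 4 → ℂ)
    (hball : ((star v) ⬝ᵥ (UmatC *ᵥ v)).re < 0) :
    v ⬝ᵥ (UmatC *ᵥ v) ≠ 0 := by
  intro h
  rw [dotProduct_UmatC_mulVec] at h
  rw [re_star_dotProduct_UmatC_mulVec] at hball
  have := Complex.re_conj_mul_add_sum_norm_sq_nonneg (v 0) (v 1) ![v 2, v 3]
    (by simpa [Fin.sum_univ_two] using h)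
  simp only [Fin.sum_univ_two, Matrix.cons_val_zero, Matrix.cons_val_one] at this
  linarith
end
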